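/- Let f : ℝⁿ → ℝⁿ be Lipschitz with constant K and bounded by M on the closed ball D = {y : ‖y - y₀‖ ≤ b} (b > 0, M > 0). Then the initial value problem y'' = f(y), y(0) = y₀, y'(0) = 0 has a unique solution on the interval [-√(2b/M), √(2b/M)]. -/

import Mathlib

set_option linter.unusedSectionVars false
open Set intervalIntegral MeasureTheory

variable {E : Type*} [NormedAddCommGroup E] [NormedSpace ℝ E] [CompleteSpace E]

lemma my_integral_hasDerivAt {h : ℝ → E} (hc : Continuous h) (t : ℝ) :
    HasDerivAt (fun u => ∫ s in (0:ℝ)..u, h s) (h t) t :=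
  intervalIntegral.integral_hasDerivAt_right (hc.intervalIntegrable _ _)
    hc.stronglyMeasurable.stronglyMeasurableAtFilter hc.continuousAt

noncomputable def prim (y₀ : E) (h : ℝ → E) (t : ℝ) : E :=
  y₀ + t • (∫ s in (0:ℝ)..t, h s) - ∫ s in (0:ℝ)..t, s • h s

lemma prim_hasDerivAt {h : ℝ → E} (y₀ : E) (hc : Continuous h) (t : ℝ) :
    HasDerivAt (prim y₀ h) (∫ s in (0:ℝ)..t, h s) t := by
  have h1 := (hasDerivAt_id t).smul (my_integral_hasDerivAt hc t)
  have h2 : HasDerivAt (fun u : ℝ => ∫ s in (0:ℝ)..u, s • h s) (t • h t) t :=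
    my_integral_hasDerivAt (by fun_prop) t
  have H := ((hasDerivAt_const t y₀).add h1).sub h2
  convert H using 1
  case e'_8 => rfl
  simp

lemma prim_continuous {h : ℝ → E} (y₀ : E) (hc : Continuous h) : Continuous (prim y₀ h) :=
  continuous_iff_continuousAt.mpr fun t => (prim_hasDerivAt y₀ hc t).continuousAt

lemma prim_zero (y₀ : E) (h : ℝ → E) : prim y₀ h 0 = y₀ := by
  simp [prim]

lemma prim_eq_integral {h : ℝ → E} (y₀ : E) (hc : Continuous h) (t : ℝ) :
    prim y₀ h t = y₀ + ∫ s in (0:ℝ)..t, (t - s) • h s := by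
  have i1 : IntervalIntegrable (fun s : ℝ => t • h s) volume 0 t :=
    Continuous.intervalIntegrable (by fun_prop) _ _
  have i2 : IntervalIntegrable (fun s : ℝ => s • h s) volume 0 t :=
    Continuous.intervalIntegrable (by fun_prop) _ _
  have e1 : ∫ s in (0:ℝ)..t, (t - s) • h s
      = (∫ s in (0:ℝ)..t, t • h s) - ∫ s in (0:ℝ)..t, s • h s := by
    rw [← intervalIntegral.integral_sub i1 i2]
    apply intervalIntegral.integral_congr
    intro s _
    simp [sub_smul]
  rw [e1, intervalIntegral.integral_smul]
  unfold prim
  abel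

lemma prim_sub {h1 h2 : ℝ → E} (y₀ : E) (hc1 : Continuous h1) (hc2 : Continuous h2) (t : ℝ) :
    prim y₀ h1 t - prim y₀ h2 t = ∫ s in (0:ℝ)..t, (t - s) • (h1 s - h2 s) := by
  rw [prim_eq_integral y₀ hc1, prim_eq_integral y₀ hc2]
  have i1 : IntervalIntegrable (fun s : ℝ => (t - s) • h1 s) volume 0 t :=
    Continuous.intervalIntegrable (by fun_prop) _ _
  have i2 : IntervalIntegrable (fun s : ℝ => (t - s) • h2 s) volume 0 t :=
    Continuous.intervalIntegrable (by fun_prop) _ _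
  have e1 : ∫ s in (0:ℝ)..t, (t - s) • (h1 s - h2 s)
      = (∫ s in (0:ℝ)..t, (t - s) • h1 s) - ∫ s in (0:ℝ)..t, (t - s) • h2 s := by
    rw [← intervalIntegral.integral_sub i1 i2]
    apply intervalIntegral.integral_congr
    intro s _
    simp [smul_sub]
  rw [e1]
  abel


lemma abs_integral_abs_pow (m : ℕ) (t : ℝ) :
    |∫ s in (0:ℝ)..t, |s| ^ m| = |t| ^ (m + 1) / (m + 1) := by
  have key : ∀ u : ℝ, 0 ≤ u → |∫ s in (0:ℝ)..u, |s| ^ m| = |u| ^ (m+1) / (m+1) := by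
    intro u hu
    have h1 : ∫ s in (0:ℝ)..u, |s| ^ m = ∫ s in (0:ℝ)..u, s ^ m := by
      apply intervalIntegral.integral_congr
      intro s hs
      rw [Set.uIcc_of_le hu] at hs
      simp only [abs_of_nonneg hs.1]
    rw [h1, integral_pow]
    have h0 : (0:ℝ) ^ (m+1) = 0 := zero_pow (Nat.succ_ne_zero m)
    rw [h0, sub_zero, abs_of_nonneg (by positivity), abs_of_nonneg hu]
  rcases le_or_gt 0 t with h | h
  · exact key t h
  · have heven : (fun s : ℝ => |s| ^ m) = fun s => |(-s)| ^ m := by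
      funext s; rw [abs_neg]
    have h3 := intervalIntegral.integral_comp_neg (a := (0:ℝ)) (b := t) (fun s => |s| ^ m)
    rw [neg_zero] at h3
    have h2 : ∫ s in (0:ℝ)..t, |s| ^ m = ∫ s in (-t)..(0:ℝ), |s| ^ m := by
      conv_lhs => rw [heven]
      exact h3
    rw [h2, intervalIntegral.integral_symm, abs_neg, key (-t) (by linarith), abs_neg]

lemma abs_sub_le_of_uIoc {t s : ℝ} (hs : s ∈ Set.uIoc (0:ℝ) t) : |t - s| ≤ |t| := by
  rcases Set.mem_uIoc.mp hs with ⟨h1, h2⟩ | ⟨h1, h2⟩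
  · rw [abs_of_nonneg (by linarith), abs_of_nonneg (by linarith)]; linarith
  · rw [abs_of_nonpos (by linarith), abs_of_nonpos (by linarith)]; linarith

lemma abs_le_of_uIoc {t s : ℝ} (hs : s ∈ Set.uIoc (0:ℝ) t) : |s| ≤ |t| := by
  rcases Set.mem_uIoc.mp hs with ⟨h1, h2⟩ | ⟨h1, h2⟩
  · rw [abs_of_nonneg (by linarith), abs_of_nonneg (by linarith)]; linarith
  · rw [abs_of_nonpos (by linarith), abs_of_nonpos (by linarith)]; linarith

lemma norm_integral_kernel_le {k : ℝ → E} (hc : Continuous k) {M' : ℝ} (t : ℝ)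
    (hM' : 0 ≤ M') (hk : ∀ s, ‖k s‖ ≤ M') :
    ‖∫ s in (0:ℝ)..t, (t - s) • k s‖ ≤ M' * |t| ^ 2 / 2 := by
  have hb : IntervalIntegrable (fun s : ℝ => M' * |t - s|) volume 0 t :=
    Continuous.intervalIntegrable (by fun_prop) _ _
  have h1 : ‖∫ s in (0:ℝ)..t, (t - s) • k s‖ ≤ abs (∫ s in (0:ℝ)..t, M' * |t - s|) := by
    apply intervalIntegral.norm_integral_le_abs_of_norm_le _ hb
    filter_upwards with s
    rw [norm_smul, Real.norm_eq_abs]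
    exact mul_le_mul_of_nonneg_left (hk s) (abs_nonneg _) |>.trans (by rw [mul_comm])
  refine h1.trans ?_
  rw [intervalIntegral.integral_const_mul, abs_mul, abs_of_nonneg hM']
  have h2 : (∫ s in (0:ℝ)..t, |t - s|) = ∫ u in (0:ℝ)..t, |u| := by
    have := intervalIntegral.integral_comp_sub_left (a := (0:ℝ)) (b := t) (fun u => |u|) t
    simpa using this
  rw [h2]
  have h3 : abs (∫ u in (0:ℝ)..t, |u|) = t ^ 2 / 2 := by
    have := abs_integral_abs_pow 1 t
    norm_num [sq_abs] at this
    exact this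
  rw [h3]
  exact le_of_eq (by rw [sq_abs]; ring)

lemma norm_integral_kernel_pow_le {k : ℝ → E} (hc : Continuous k) {C T t : ℝ} (m : ℕ)
    (hC : 0 ≤ C) (hT : |t| ≤ T) (hk : ∀ s ∈ Set.uIoc (0:ℝ) t, ‖k s‖ ≤ C * |s| ^ m) :
    ‖∫ s in (0:ℝ)..t, (t - s) • k s‖ ≤ T * C * |t| ^ (m + 1) / (m + 1) := by
  have hT0 : 0 ≤ T := le_trans (abs_nonneg t) hT
  have hb : IntervalIntegrable (fun s : ℝ => T * C * |s| ^ m) volume 0 t :=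
    Continuous.intervalIntegrable (by fun_prop) _ _
  have h1 : ‖∫ s in (0:ℝ)..t, (t - s) • k s‖ ≤ |∫ s in (0:ℝ)..t, T * C * |s| ^ m| := by
    apply intervalIntegral.norm_integral_le_abs_of_norm_le _ hb
    rw [MeasureTheory.ae_restrict_iff' measurableSet_uIoc]
    filter_upwards with s hs
    rw [norm_smul, Real.norm_eq_abs]
    calc |t - s| * ‖k s‖ ≤ T * (C * |s| ^ m) := by
          apply mul_le_mul ((abs_sub_le_of_uIoc hs).trans hT) (hk s hs) (norm_nonneg _) hT0
      _ = T * C * |s| ^ m := by ring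
  refine h1.trans ?_
  rw [intervalIntegral.integral_const_mul, abs_mul, abs_of_nonneg (by positivity)]
  rw [abs_integral_abs_pow m t, mul_div_assoc]

noncomputable def pmap (y₀ : E) {g : E → E} {T : ℝ} (hg : Continuous g) (hT : 0 < T)
    (u : C(Set.Icc (-T) T, E)) : C(Set.Icc (-T) T, E) :=
  ⟨fun t => prim y₀ (fun s => g (Set.IccExtend (neg_le_self hT.le) u s)) t.1, by
    have hc : Continuous fun s => g (Set.IccExtend (neg_le_self hT.le) u s) :=
      hg.comp (u.continuous.comp continuous_projIcc)
    exact (prim_continuous y₀ hc).comp continuous_subtype_val⟩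

lemma pmap_apply (y₀ : E) {g : E → E} {T : ℝ} (hg : Continuous g) (hT : 0 < T)
    (u : C(Set.Icc (-T) T, E)) (t : Set.Icc (-T) T) :
    pmap y₀ hg hT u t = prim y₀ (fun s => g (Set.IccExtend (neg_le_self hT.le) u s)) t.1 := rfl

lemma extend_continuous {g : E → E} {T : ℝ} (hg : Continuous g) (hT : 0 < T)
    (u : C(Set.Icc (-T) T, E)) :
    Continuous fun s => g (Set.IccExtend (neg_le_self hT.le) u s) :=
  hg.comp (u.continuous.comp continuous_projIcc)

lemma uIcc_zero_subset {T t : ℝ} (hT : 0 < T) (ht : t ∈ Set.Icc (-T) T) :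
    Set.uIcc (0:ℝ) t ⊆ Set.Icc (-T) T := by
  rw [← Set.uIcc_of_le (by linarith : (-T) ≤ T)]
  apply Set.uIcc_subset_uIcc
  · rw [Set.uIcc_of_le (by linarith : (-T) ≤ T)]
    exact ⟨by linarith, hT.le⟩
  · rwa [Set.uIcc_of_le (by linarith : (-T) ≤ T)]

theorem core (y₀ : E) (g : E → E) (L T : ℝ) (hT : 0 < T) (hL : 0 ≤ L)
    (hlip : ∀ x y, ‖g x - g y‖ ≤ L * ‖x - y‖) :
    ∃ φ : ℝ → E, Continuous φ ∧
      (∀ t ∈ Set.Icc (-T) T, φ t = prim y₀ (fun s => g (φ s)) t) ∧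
      ∀ ψ : ℝ → E, ContinuousOn ψ (Set.Icc (-T) T) →
        (∀ t ∈ Set.Icc (-T) T, ψ t = y₀ + ∫ s in (0:ℝ)..t, (t - s) • g (ψ s)) →
        Set.EqOn φ ψ (Set.Icc (-T) T) := by
  have hg : Continuous g := by
    have : LipschitzWith (Real.toNNReal L) g := by
      apply LipschitzWith.of_dist_le_mul
      intro x y
      rw [dist_eq_norm, dist_eq_norm, Real.coe_toNNReal L hL]
      exact hlip x y
    exact this.continuous
  set I : Set ℝ := Set.Icc (-T) T with hI
  set P : C(I, E) → C(I, E) := pmap y₀ hg hT with hP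
  -- iterate estimate
  have hiter : ∀ (m : ℕ) (u v : C(I, E)) (t : I),
      ‖(P^[m] u) t - (P^[m] v) t‖
        ≤ dist u v * (L * T) ^ m * |t.1| ^ m / (Nat.factorial m) := by
    intro m
    induction m with
    | zero =>
      intro u v t
      simp only [Function.iterate_zero, id_eq, pow_zero, Nat.factorial_zero, Nat.cast_one,
        mul_one, div_one]
      rw [← dist_eq_norm]
      exact ContinuousMap.dist_apply_le_dist t
    | succ m ih =>
      intro u v t
      rw [Function.iterate_succ_apply', Function.iterate_succ_apply']
      set a := P^[m] u with ha
      set b := P^[m] v with hb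
      have hca := extend_continuous hg hT a
      have hcb := extend_continuous hg hT b
      have hdiff : (P a) t - (P b) t
          = ∫ s in (0:ℝ)..t.1, (t.1 - s) • ((fun s => g (Set.IccExtend (neg_le_self hT.le) a s)) s
              - (fun s => g (Set.IccExtend (neg_le_self hT.le) b s)) s) := by
        rw [pmap_apply, pmap_apply]
        exact prim_sub y₀ hca hcb t.1
      rw [hdiff]
      have htT : |t.1| ≤ T := abs_le.mpr ⟨t.2.1, t.2.2⟩
      have hCnn : 0 ≤ L * dist u v * (L * T) ^ m / (Nat.factorial m) := by positivity
      have hbd : ∀ s ∈ Set.uIoc (0:ℝ) t.1,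
          ‖(fun s => g (Set.IccExtend (neg_le_self hT.le) a s)) s
            - (fun s => g (Set.IccExtend (neg_le_self hT.le) b s)) s‖
          ≤ (L * dist u v * (L * T) ^ m / (Nat.factorial m)) * |s| ^ m := by
        intro s hs
        have hsI : s ∈ I := uIcc_zero_subset hT t.2 (Set.uIoc_subset_uIcc hs)
        simp only
        rw [Set.IccExtend_of_mem _ a hsI, Set.IccExtend_of_mem _ b hsI]
        calc ‖g (a ⟨s, hsI⟩) - g (b ⟨s, hsI⟩)‖ ≤ L * ‖a ⟨s, hsI⟩ - b ⟨s, hsI⟩‖ := hlip _ _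
          _ ≤ L * (dist u v * (L * T) ^ m * |s| ^ m / (Nat.factorial m)) := by
              apply mul_le_mul_of_nonneg_left _ hL
              have := ih u v ⟨s, hsI⟩
              simpa using this
          _ = (L * dist u v * (L * T) ^ m / (Nat.factorial m)) * |s| ^ m := by ring
      have := norm_integral_kernel_pow_le (hca.sub hcb) m hCnn htT hbd
      refine this.trans (le_of_eq ?_)
      rw [Nat.factorial_succ]
      push_cast
      field_simp
      ring
  -- distance estimate
  have hdist : ∀ (m : ℕ) (u v : C(I, E)),
      dist (P^[m] u) (P^[m] v) ≤ ((L * T * T) ^ m / (Nat.factorial m)) * dist u v := by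
    intro m u v
    rw [ContinuousMap.dist_le (by positivity)]
    intro t
    rw [dist_eq_norm]
    refine (hiter m u v t).trans ?_
    have htT : |t.1| ≤ T := abs_le.mpr ⟨t.2.1, t.2.2⟩
    calc dist u v * (L * T) ^ m * |t.1| ^ m / (Nat.factorial m)
        ≤ dist u v * (L * T) ^ m * T ^ m / (Nat.factorial m) := by
          gcongr
      _ = ((L * T * T) ^ m / (Nat.factorial m)) * dist u v := by
          rw [mul_pow, mul_pow]
          ring
  obtain ⟨m, hm⟩ : ∃ m : ℕ, (L * T * T) ^ m / (Nat.factorial m) < 1 := by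
    have := FloorSemiring.tendsto_pow_div_factorial_atTop (L * T * T)
    exact (this.eventually_lt_const one_pos).exists
  haveI : Nonempty C(I, E) := ⟨ContinuousMap.const _ y₀⟩
  set Km : NNReal := ⟨(L * T * T) ^ m / (Nat.factorial m), by positivity⟩ with hKm
  have hcontr : ContractingWith Km (P^[m]) := by
    constructor
    · exact_mod_cast hm
    · apply LipschitzWith.of_dist_le_mul
      intro u v
      exact_mod_cast hdist m u v
  set u₀ : C(I, E) := ContractingWith.fixedPoint (P^[m]) hcontr with hu₀
  have hfix : Function.IsFixedPt P u₀ := hcontr.isFixedPt_fixedPoint_iterate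
  refine ⟨Set.IccExtend (neg_le_self hT.le) u₀, Continuous.Icc_extend' u₀.continuous, ?_, ?_⟩
  · intro t ht
    conv_lhs => rw [Set.IccExtend_of_mem _ u₀ ht, ← hfix]
    exact pmap_apply y₀ hg hT u₀ ⟨t, ht⟩
  · intro ψ hψc hψeq
    set v : C(I, E) := ⟨I.restrict ψ, hψc.restrict⟩ with hv
    have hfv : Function.IsFixedPt P v := by
      show P v = v
      ext t
      rw [pmap_apply]
      rw [prim_eq_integral y₀ (extend_continuous hg hT v)]
      have : (∫ s in (0:ℝ)..t.1, (t.1 - s) • g (Set.IccExtend (neg_le_self hT.le) v s))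
          = ∫ s in (0:ℝ)..t.1, (t.1 - s) • g (ψ s) := by
        apply intervalIntegral.integral_congr
        intro s hs
        have hsI : s ∈ I := uIcc_zero_subset hT t.2 hs
        have hext : Set.IccExtend (neg_le_self hT.le) (⇑v) s = ψ s := by
          rw [Set.IccExtend_of_mem _ (⇑v) hsI]
          rfl
        simp only [hext]
      rw [this, ← hψeq t.1 t.2]
      rfl
    have hvu : v = u₀ := hcontr.fixedPoint_unique (hfv.iterate m)
    intro t ht
    rw [Set.IccExtend_of_mem _ u₀ ht, ← hvu]
    rfl

lemma radial_lip {b : ℝ} (hb : 0 < b) (p q : E) :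
    ‖(if ‖p‖ ≤ b then (1:ℝ) else b / ‖p‖) • p - (if ‖q‖ ≤ b then (1:ℝ) else b / ‖q‖) • q‖
      ≤ 2 * ‖p - q‖ := by
  have key2 : ∀ x z : E, ‖x‖ ≤ b → b < ‖z‖ → ‖x - (b / ‖z‖) • z‖ ≤ 2 * ‖x - z‖ := by
    intro x z hx hz
    have hz0 : (0:ℝ) < ‖z‖ := hb.trans hz
    have hle1 : b / ‖z‖ ≤ 1 := (div_le_one hz0).mpr hz.le
    have key : x - (b / ‖z‖) • z = (x - z) + (1 - b / ‖z‖) • z := by module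
    have hnsub : ‖z‖ - ‖x‖ ≤ ‖x - z‖ := by
      rw [norm_sub_rev]
      exact norm_sub_norm_le z x
    calc ‖x - (b / ‖z‖) • z‖ = ‖(x - z) + (1 - b / ‖z‖) • z‖ := by rw [key]
      _ ≤ ‖x - z‖ + ‖(1 - b / ‖z‖) • z‖ := norm_add_le _ _
      _ = ‖x - z‖ + (1 - b / ‖z‖) * ‖z‖ := by
          rw [norm_smul, Real.norm_eq_abs, abs_of_nonneg (by linarith)]
      _ = ‖x - z‖ + (‖z‖ - b) := by
          congr 1
          field_simp
      _ ≤ ‖x - z‖ + (‖z‖ - ‖x‖) := by linarith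
      _ ≤ ‖x - z‖ + ‖x - z‖ := by linarith
      _ = 2 * ‖x - z‖ := by ring
  by_cases hp : ‖p‖ ≤ b <;> by_cases hq : ‖q‖ ≤ b <;> simp only [hp, hq, if_pos, if_neg,
    if_true, if_false, one_smul]
  · linarith [norm_nonneg (p - q)]
  · exact key2 p q hp (not_le.mp hq)
  · rw [norm_sub_rev, norm_sub_rev p q]
    exact key2 q p hq (not_le.mp hp)
  · push_neg at hp hq
    have hp0 : (0:ℝ) < ‖p‖ := hb.trans hp
    have hq0 : (0:ℝ) < ‖q‖ := hb.trans hq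
    have key : (b / ‖p‖) • p - (b / ‖q‖) • q
        = (b / ‖p‖) • (p - q) + ((b / ‖p‖) - (b / ‖q‖)) • q := by module
    have habs : |‖q‖ - ‖p‖| ≤ ‖p - q‖ := by
      rw [norm_sub_rev]
      exact abs_norm_sub_norm_le q p
    have h4 : |b / ‖p‖ - b / ‖q‖| * ‖q‖ ≤ ‖p - q‖ := by
      have hne : b / ‖p‖ - b / ‖q‖ = b * (‖q‖ - ‖p‖) / (‖p‖ * ‖q‖) := by
        field_simp
      rw [hne, abs_div, abs_mul, abs_of_pos hb, abs_of_pos (mul_pos hp0 hq0),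
        div_mul_eq_mul_div, div_le_iff₀ (mul_pos hp0 hq0)]
      have hIq : (0:ℝ) ≤ |‖q‖ - ‖p‖| * ‖q‖ := by positivity
      have h1 : b * (|‖q‖ - ‖p‖| * ‖q‖) ≤ ‖p‖ * (|‖q‖ - ‖p‖| * ‖q‖) :=
        mul_le_mul_of_nonneg_right hp.le hIq
      have h2 : ‖p‖ * (|‖q‖ - ‖p‖| * ‖q‖) ≤ ‖p‖ * (‖p - q‖ * ‖q‖) := by
        apply mul_le_mul_of_nonneg_left _ hp0.le
        exact mul_le_mul_of_nonneg_right habs hq0.le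
      nlinarith [h1, h2]
    calc ‖(b / ‖p‖) • p - (b / ‖q‖) • q‖
        = ‖(b / ‖p‖) • (p - q) + ((b / ‖p‖) - (b / ‖q‖)) • q‖ := by rw [key]
      _ ≤ ‖(b / ‖p‖) • (p - q)‖ + ‖((b / ‖p‖) - (b / ‖q‖)) • q‖ := norm_add_le _ _
      _ = (b / ‖p‖) * ‖p - q‖ + |b / ‖p‖ - b / ‖q‖| * ‖q‖ := by
          rw [norm_smul, norm_smul, Real.norm_eq_abs, Real.norm_eq_abs,
            abs_of_pos (div_pos hb hp0)]
      _ ≤ 1 * ‖p - q‖ + ‖p - q‖ := by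
          have : b / ‖p‖ ≤ 1 := (div_le_one hp0).mpr hp.le
          have := mul_le_mul_of_nonneg_right this (norm_nonneg (p - q))
          linarith [h4]
      _ = 2 * ‖p - q‖ := by ring

set_option maxHeartbeats 1000000 in
theorem ivp_exists_unique (n : ℕ) (f : EuclideanSpace ℝ (Fin n) → EuclideanSpace ℝ (Fin n))
    (y₀ : EuclideanSpace ℝ (Fin n)) (b M K : ℝ) (hb : 0 < b) (hM : 0 < M) (hK : 0 ≤ K)
    (hlip : ∀ y ∈ Metric.closedBall y₀ b, ∀ z ∈ Metric.closedBall y₀ b,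
        ‖f y - f z‖ ≤ K * ‖y - z‖)
    (hbound : ∀ y ∈ Metric.closedBall y₀ b, ‖f y‖ ≤ M) :
    ∃ φ : ℝ → EuclideanSpace ℝ (Fin n),
      (ContDiffOn ℝ 2 φ (Set.Icc (-Real.sqrt (2 * b / M)) (Real.sqrt (2 * b / M))) ∧
       (∀ t ∈ Set.Icc (-Real.sqrt (2 * b / M)) (Real.sqrt (2 * b / M)),
          φ t ∈ Metric.closedBall y₀ b) ∧
       (∀ t ∈ Set.Icc (-Real.sqrt (2 * b / M)) (Real.sqrt (2 * b / M)),
          derivWithin (derivWithin φ (Set.Icc (-Real.sqrt (2 * b / M)) (Real.sqrt (2 * b / M))))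
            (Set.Icc (-Real.sqrt (2 * b / M)) (Real.sqrt (2 * b / M))) t = f (φ t)) ∧
       φ 0 = y₀ ∧
       derivWithin φ (Set.Icc (-Real.sqrt (2 * b / M)) (Real.sqrt (2 * b / M))) 0 = 0) ∧
      (∀ ψ : ℝ → EuclideanSpace ℝ (Fin n),
        (ContDiffOn ℝ 2 ψ (Set.Icc (-Real.sqrt (2 * b / M)) (Real.sqrt (2 * b / M))) ∧
         (∀ t ∈ Set.Icc (-Real.sqrt (2 * b / M)) (Real.sqrt (2 * b / M)),
            ψ t ∈ Metric.closedBall y₀ b) ∧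
         (∀ t ∈ Set.Icc (-Real.sqrt (2 * b / M)) (Real.sqrt (2 * b / M)),
            derivWithin (derivWithin ψ (Set.Icc (-Real.sqrt (2 * b / M)) (Real.sqrt (2 * b / M))))
              (Set.Icc (-Real.sqrt (2 * b / M)) (Real.sqrt (2 * b / M))) t = f (ψ t)) ∧
         ψ 0 = y₀ ∧
         derivWithin ψ (Set.Icc (-Real.sqrt (2 * b / M)) (Real.sqrt (2 * b / M))) 0 = 0) →
        Set.EqOn φ ψ (Set.Icc (-Real.sqrt (2 * b / M)) (Real.sqrt (2 * b / M)))) := by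
  classical
  set T : ℝ := Real.sqrt (2 * b / M) with hTdef
  have hT : 0 < T := Real.sqrt_pos.mpr (by positivity)
  have hTsq : T ^ 2 = 2 * b / M := Real.sq_sqrt (by positivity)
  set I : Set ℝ := Set.Icc (-T) T with hIdef
  have h0I : (0:ℝ) ∈ I := ⟨by linarith, hT.le⟩
  have hTT : -T < T := by linarith
  have uD : UniqueDiffOn ℝ I := uniqueDiffOn_Icc hTT
  -- the retraction
  set r : EuclideanSpace ℝ (Fin n) → EuclideanSpace ℝ (Fin n) := fun x => y₀ + (if ‖x - y₀‖ ≤ b then (1:ℝ) else b / ‖x - y₀‖) • (x - y₀)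
    with hrdef
  have hrmem : ∀ x : EuclideanSpace ℝ (Fin n), r x ∈ Metric.closedBall y₀ b := by
    intro x
    rw [Metric.mem_closedBall, dist_eq_norm, hrdef]
    simp only [add_sub_cancel_left]
    by_cases hx : ‖x - y₀‖ ≤ b
    · rw [if_pos hx, one_smul]; exact hx
    · rw [if_neg hx, norm_smul, Real.norm_eq_abs]
      push_neg at hx
      have h0 : (0:ℝ) < ‖x - y₀‖ := hb.trans hx
      rw [abs_of_pos (div_pos hb h0)]
      rw [div_mul_cancel₀ _ h0.ne']
  have hrid : ∀ x ∈ Metric.closedBall y₀ b, r x = x := by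
    intro x hx
    rw [Metric.mem_closedBall, dist_eq_norm] at hx
    rw [hrdef]
    simp only [if_pos hx, one_smul]
    module
  have hrlip : ∀ x y, ‖r x - r y‖ ≤ 2 * ‖x - y‖ := by
    intro x y
    have := radial_lip hb (x - y₀) (y - y₀)
    have he : r x - r y = (if ‖x - y₀‖ ≤ b then (1:ℝ) else b / ‖x - y₀‖) • (x - y₀)
        - (if ‖y - y₀‖ ≤ b then (1:ℝ) else b / ‖y - y₀‖) • (y - y₀) := by
      rw [hrdef]; module
    rw [he]
    have he2 : x - y₀ - (y - y₀) = x - y := by module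
    rw [← he2]
    exact this
  -- the modified field
  set g : EuclideanSpace ℝ (Fin n) → EuclideanSpace ℝ (Fin n) := fun x => f (r x) with hgdef
  have hglip : ∀ x y, ‖g x - g y‖ ≤ (2 * K) * ‖x - y‖ := by
    intro x y
    calc ‖g x - g y‖ ≤ K * ‖r x - r y‖ := hlip _ (hrmem x) _ (hrmem y)
      _ ≤ K * (2 * ‖x - y‖) := mul_le_mul_of_nonneg_left (hrlip x y) hK
      _ = (2 * K) * ‖x - y‖ := by ring
  have hgc : Continuous g := by
    have : LipschitzWith (Real.toNNReal (2 * K)) g := by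
      apply LipschitzWith.of_dist_le_mul
      intro x y
      rw [dist_eq_norm, dist_eq_norm, Real.coe_toNNReal _ (by linarith)]
      exact hglip x y
    exact this.continuous
  have hgbound : ∀ x, ‖g x‖ ≤ M := fun x => hbound _ (hrmem x)
  have hgf : ∀ x ∈ Metric.closedBall y₀ b, g x = f x := by
    intro x hx
    rw [hgdef]
    simp only [hrid x hx]
  -- apply the core theorem
  obtain ⟨φ, hφc, hφeq, huniq⟩ := core y₀ g (2 * K) T hT (by linarith) hglip
  set h : ℝ → EuclideanSpace ℝ (Fin n) := fun s => g (φ s) with hhdef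
  have hhc : Continuous h := hgc.comp hφc
  set G : ℝ → EuclideanSpace ℝ (Fin n) := fun t => ∫ s in (0:ℝ)..t, h s with hGdef
  set F : ℝ → EuclideanSpace ℝ (Fin n) := prim y₀ h with hFdef
  have hF' : ∀ t, HasDerivAt F (G t) t := fun t => prim_hasDerivAt y₀ hhc t
  have hG' : ∀ t, HasDerivAt G (h t) t := fun t => my_integral_hasDerivAt hhc t
  have hEq : Set.EqOn φ F I := fun t ht => hφeq t ht
  -- membership
  have hmem : ∀ t ∈ I, φ t ∈ Metric.closedBall y₀ b := by
    intro t ht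
    rw [Metric.mem_closedBall, dist_eq_norm]
    have e1 : φ t - y₀ = ∫ s in (0:ℝ)..t, (t - s) • h s := by
      rw [hEq ht, hFdef, prim_eq_integral y₀ hhc t]
      module
    rw [e1]
    have := norm_integral_kernel_le hhc t hM.le (fun s => hgbound (φ s))
    refine this.trans ?_
    have htT : |t| ≤ T := abs_le.mpr ⟨ht.1, ht.2⟩
    have h2 : |t| ^ 2 ≤ T ^ 2 := by
      apply pow_le_pow_left₀ (abs_nonneg t) htT
    calc M * |t| ^ 2 / 2 ≤ M * T ^ 2 / 2 := by nlinarith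
      _ = b := by rw [hTsq]; field_simp
  have hgfφ : ∀ t ∈ I, g (φ t) = f (φ t) := fun t ht => hgf _ (hmem t ht)
  -- first derivative within
  have hd1 : ∀ t ∈ I, derivWithin φ I t = G t := by
    intro t ht
    rw [derivWithin_congr hEq (hEq ht)]
    exact (hF' t).hasDerivWithinAt.derivWithin (uD t ht)
  have hd2 : ∀ t ∈ I, derivWithin (derivWithin φ I) I t = h t := by
    intro t ht
    rw [derivWithin_congr (fun s hs => hd1 s hs) (hd1 t ht)]
    exact (hG' t).hasDerivWithinAt.derivWithin (uD t ht)
  have hG0 : G 0 = 0 := by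
    rw [hGdef]
    simp
  -- contdiff
  have hGd : ContDiff ℝ 1 G := by
    rw [contDiff_one_iff_deriv]
    refine ⟨fun t => (hG' t).differentiableAt, ?_⟩
    have : deriv G = h := funext fun t => (hG' t).deriv
    rw [this]; exact hhc
  have hF2 : ContDiff ℝ 2 F := by
    rw [show (2 : WithTop ℕ∞) = 1 + 1 from rfl, contDiff_succ_iff_deriv]
    refine ⟨fun t => (hF' t).differentiableAt, by simp, ?_⟩
    have : deriv F = G := funext fun t => (hF' t).deriv
    rw [this]; exact hGd
  refine ⟨φ, ⟨hF2.contDiffOn.congr hEq, hmem, ?_, ?_, ?_⟩, ?_⟩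
  · intro t ht
    rw [hd2 t ht]
    exact hgfφ t ht
  · rw [hEq h0I, hFdef, prim_zero]
  · rw [hd1 0 h0I, hG0]
  -- uniqueness
  · rintro ψ ⟨hψcd, hψmem, hψode, hψ0, hψ'0⟩
    have hψcont : ContinuousOn ψ I := hψcd.continuousOn
    set ψE : ℝ → EuclideanSpace ℝ (Fin n) := Set.IccExtend (neg_le_self hT.le) (I.restrict ψ) with hψE
    have hψEc : Continuous ψE := Continuous.Icc_extend' hψcont.restrict
    have hψEeq : ∀ t ∈ I, ψE t = ψ t := by
      intro t ht
      rw [hψE, Set.IccExtend_of_mem _ _ ht]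
      rfl
    set h₂ : ℝ → EuclideanSpace ℝ (Fin n) := fun s => g (ψE s) with hh₂def
    have hh₂c : Continuous h₂ := hgc.comp hψEc
    have hh₂f : ∀ t ∈ I, h₂ t = f (ψ t) := by
      intro t ht
      rw [hh₂def]
      simp only [hψEeq t ht]
      exact hgf _ (hψmem t ht)
    set G₂ : ℝ → EuclideanSpace ℝ (Fin n) := fun t => ∫ s in (0:ℝ)..t, h₂ s with hG₂def
    set F₂ : ℝ → EuclideanSpace ℝ (Fin n) := prim y₀ h₂ with hF₂def
    have hG₂' : ∀ t, HasDerivAt G₂ (h₂ t) t := fun t => my_integral_hasDerivAt hh₂c t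
    have hF₂' : ∀ t, HasDerivAt F₂ (G₂ t) t := fun t => prim_hasDerivAt y₀ hh₂c t
    have hG₂0 : G₂ 0 = 0 := by rw [hG₂def]; simp
    set A : ℝ → EuclideanSpace ℝ (Fin n) := derivWithin ψ I with hAdef
    have hA1 : ContDiffOn ℝ 1 A I := hψcd.derivWithin uD (by norm_num)
    have hAdiff : DifferentiableOn ℝ A I := hA1.differentiableOn one_ne_zero
    have hψdiff : DifferentiableOn ℝ ψ I := hψcd.differentiableOn (by norm_num)
    -- step 1 : A = G₂ on I
    have hdG₂ : ∀ x ∈ I, derivWithin G₂ I x = h₂ x := fun x hx =>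
      (hG₂' x).hasDerivWithinAt.derivWithin (uD x hx)
    have hstep1 : ∀ x ∈ I, A x - G₂ x = A (-T) - G₂ (-T) := by
      apply constant_of_derivWithin_zero
      · exact hAdiff.sub fun x hx => (hG₂' x).differentiableAt.differentiableWithinAt
      · intro x hx
        have hxI : x ∈ I := Set.Ico_subset_Icc_self hx
        rw [derivWithin_fun_sub (hAdiff x hxI)
          (hG₂' x).differentiableAt.differentiableWithinAt]
        rw [hdG₂ x hxI, hh₂f x hxI]
        rw [hψode x hxI]
        exact sub_self _
    have hst1 : A (-T) - G₂ (-T) = 0 := by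
      have := hstep1 0 h0I
      rw [hψ'0, hG₂0] at this
      simpa using this.symm
    have hAG : ∀ x ∈ I, A x = G₂ x := by
      intro x hx
      have := hstep1 x hx
      rw [hst1] at this
      exact sub_eq_zero.mp this
    -- step 2 : ψ = F₂ on I
    have hdF₂ : ∀ x ∈ I, derivWithin F₂ I x = G₂ x := fun x hx =>
      (hF₂' x).hasDerivWithinAt.derivWithin (uD x hx)
    have hstep2 : ∀ x ∈ I, ψ x - F₂ x = ψ (-T) - F₂ (-T) := by
      apply constant_of_derivWithin_zero
      · exact hψdiff.sub fun x hx => (hF₂' x).differentiableAt.differentiableWithinAt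
      · intro x hx
        have hxI : x ∈ I := Set.Ico_subset_Icc_self hx
        rw [derivWithin_fun_sub (hψdiff x hxI)
          (hF₂' x).differentiableAt.differentiableWithinAt]
        rw [hdF₂ x hxI, ← hAdef, hAG x hxI]
        exact sub_self _
    have hst2 : ψ (-T) - F₂ (-T) = 0 := by
      have := hstep2 0 h0I
      rw [hψ0, hF₂def, prim_zero] at this
      simpa using this.symm
    have hψF₂ : ∀ x ∈ I, ψ x = F₂ x := by
      intro x hx
      have := hstep2 x hx
      rw [hst2] at this
      exact sub_eq_zero.mp this
    apply huniq ψ hψcont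
    intro t ht
    rw [hψF₂ t ht, hF₂def, prim_eq_integral y₀ hh₂c t]
    congr 1
    apply intervalIntegral.integral_congr
    intro s hs
    have hsI : s ∈ I := uIcc_zero_subset hT ht hs
    simp only [hh₂def, hψEeq s hsI]
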